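/- Let G = (V, ω) be a finite weighted graph with vertex measure μ, let h, f : V → ℝ with f_i > 0 for all i, and let α ≥ p > 1. Suppose φ̂ : V → ℝ satisfies φ̂_i > 0 for all i ∈ V and I(φ̂) ≤ I(φ) for all φ ≥ 0 with φ ≢ 0 (i.e. φ̂ minimizes the energy functional). Then φ̂ satisfies the p-th Yamabe equation (Δ_p φ̂)_i + h_i φ̂_i^{p−1} = λ_{φ̂} f_i φ̂_i^{α−1} for every i ∈ V, where λ_{φ̂} = −(∫_E |∇φ̂|^p dω − ∫_V h φ̂^p dμ)/(∫_V f φ̂^α dμ). -/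

import Mathlib

/-!
A strictly positive minimizer stays a competitor under every small perturbation
`φ̂ + t v`, so `t ↦ I(φ̂ + t v)` has a local minimum at `t = 0` and its derivative vanishes.
By the product and chain rules this derivative is a multiple of
`N' ∫_V f φ̂^α dμ - p N ∫_V f φ̂^{α-1} v dμ`, where `N` is the numerator of `I`; the symmetry
of `ω` turns the variation of the gradient energy into `-p ∑_k v_k μ_k (Δ_p φ̂)_k`
(discrete integration by parts). Taking `v` to be the indicator of a vertex gives the equation.
-/

/-- The gradient energy `∫_E |∇φ|^p dω = (1/2) ∑_{i,j} ω_ij |φ_j − φ_i|^p`. -/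
noncomputable def gradEnergy {V : Type*} [Fintype V] (ω : V → V → ℝ) (p : ℝ)
    (φ : V → ℝ) : ℝ :=
  (1 / 2) * ∑ i, ∑ j, ω i j * |φ j - φ i| ^ p

/-- The energy functional
`I(φ) = (∫_E |∇φ|^p dω − ∫_V h φ^p dμ) (∫_V f φ^α dμ)^{−p/α}`. -/
noncomputable def energy {V : Type*} [Fintype V] (μ : V → ℝ) (ω : V → V → ℝ)
    (h f : V → ℝ) (p α : ℝ) (φ : V → ℝ) : ℝ :=
  (gradEnergy ω p φ - ∑ i, μ i * (h i * φ i ^ p)) *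
    (∑ i, μ i * (f i * φ i ^ α)) ^ (-(p / α))

/-- The discrete `p`-Laplacian on a finite weighted graph:
`(Δ_p φ)_i = (1/μ_i) ∑_j ω_ij |φ_j − φ_i|^{p−2} (φ_j − φ_i)`. -/
noncomputable def pLaplacian {V : Type*} [Fintype V] (μ : V → ℝ) (ω : V → V → ℝ)
    (p : ℝ) (φ : V → ℝ) (i : V) : ℝ :=
  (1 / μ i) * ∑ j, ω i j * |φ j - φ i| ^ (p - 2) * (φ j - φ i)

open Filter Topology

theorem hasDerivAt_add_smul_apply {V : Type*} (φ v : V → ℝ) (j : V) :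
    HasDerivAt (fun t : ℝ => (φ + t • v) j) (v j) 0 := by
  simpa using ((hasDerivAt_id (0 : ℝ)).mul_const (v j)).const_add (φ j)

section FirstVariation

variable {V : Type*} [Fintype V]

theorem hasDerivAt_sum_mul_rpow_add_smul (μ c : V → ℝ) (q : ℝ) {φ : V → ℝ}
    (hφ : ∀ j, φ j ≠ 0) (v : V → ℝ) :
    HasDerivAt (fun t : ℝ => ∑ j, μ j * (c j * (φ + t • v) j ^ q))
      (∑ j, μ j * (c j * (q * φ j ^ (q - 1) * v j))) 0 := by
  refine HasDerivAt.fun_sum fun j _ => ?_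
  have hpow := (hasDerivAt_add_smul_apply φ v j).rpow_const (p := q)
    (Or.inl (by simpa using hφ j))
  refine ((hpow.const_mul (c j)).const_mul (μ j)).congr_deriv ?_
  simp only [zero_smul, add_zero]
  ring

theorem sum_sum_mul_sub_of_antisymm (w : V → V → ℝ) (hw : ∀ k j, w j k = -w k j)
    (v : V → ℝ) :
    ∑ k, ∑ j, w k j * (v j - v k) = -2 * ∑ k, v k * ∑ j, w k j := by
  have hswap : ∑ k, ∑ j, w k j * v j = -∑ k, v k * ∑ j, w k j := by
    calc ∑ k, ∑ j, w k j * v j = ∑ k, ∑ j, w j k * v k := Finset.sum_comm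
      _ = ∑ k, ∑ j, -(v k * w k j) :=
        Finset.sum_congr rfl fun k _ => Finset.sum_congr rfl fun j _ => by rw [hw]; ring
      _ = -∑ k, v k * ∑ j, w k j := by simp only [Finset.sum_neg_distrib, Finset.mul_sum]
  have hdiag : ∑ k, ∑ j, w k j * v k = ∑ k, v k * ∑ j, w k j := by
    simp only [Finset.mul_sum, mul_comm]
  simp only [mul_sub, Finset.sum_sub_distrib, hswap, hdiag]
  ring

theorem hasDerivAt_gradEnergy_add_smul (ω : V → V → ℝ) (hω : ∀ i j, ω i j = ω j i)
    {p : ℝ} (hp : 1 < p) (φ v : V → ℝ) :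
    HasDerivAt (fun t : ℝ => gradEnergy ω p (φ + t • v))
      (-(p * ∑ k, v k * ∑ j, ω k j * |φ j - φ k| ^ (p - 2) * (φ j - φ k))) 0 := by
  set w : V → V → ℝ := fun k j => p * (ω k j * |φ j - φ k| ^ (p - 2) * (φ j - φ k))
  have hw : ∀ k j, w j k = -w k j := fun k j => by
    simp only [w, hω j k, abs_sub_comm (φ k) (φ j)]
    ring
  have hterm : ∀ k j, HasDerivAt (fun t : ℝ => ω k j * |(φ + t • v) j - (φ + t • v) k| ^ p)
      (w k j * (v j - v k)) 0 := fun k j => by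
    have hdiff := (hasDerivAt_add_smul_apply φ v j).sub (hasDerivAt_add_smul_apply φ v k)
    refine (((hasDerivAt_abs_rpow _ hp).comp 0 hdiff).const_mul (ω k j)).congr_deriv ?_
    simp only [w, Pi.sub_apply, Pi.add_apply, Pi.smul_apply, zero_smul, add_zero]
    ring
  refine ((HasDerivAt.fun_sum fun k _ => HasDerivAt.fun_sum fun j _ => hterm k j).const_mul
    (1 / 2 : ℝ)).congr_deriv ?_
  rw [sum_sum_mul_sub_of_antisymm w hw]
  simp only [w, ← Finset.mul_sum, mul_left_comm _ p]
  ring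

end FirstVariation

theorem isLocalMin_comp_add_smul {V : Type*} [Fintype V] [Nonempty V] (E : (V → ℝ) → ℝ)
    {φ : V → ℝ} (hφ : ∀ j, 0 < φ j)
    (hmin : ∀ ψ : V → ℝ, (∀ j, 0 ≤ ψ j) → ψ ≠ 0 → E φ ≤ E ψ) (v : V → ℝ) :
    IsLocalMin (fun t : ℝ => E (φ + t • v)) 0 := by
  have hnear : ∀ᶠ t in 𝓝 (0 : ℝ), ∀ j, 0 < (φ + t • v) j :=
    eventually_all.2 fun j =>
      (hasDerivAt_add_smul_apply φ v j).continuousAt.tendsto.eventually_const_lt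
        (by simpa using hφ j)
  filter_upwards [hnear] with t ht
  simpa using hmin _ (fun j => (ht j).le)
    fun h0 => (ht (Classical.arbitrary V)).ne' (congrFun h0 _)

/-- Vanishing derivative of `N * D ^ r` at a local minimum, after dividing by `D ^ (r - 1) > 0`. -/
theorem IsLocalMin.hasDerivAt_mul_rpow {N D : ℝ → ℝ} {N' D' r x : ℝ}
    (hmin : IsLocalMin (fun t => N t * D t ^ r) x) (hN : HasDerivAt N N' x)
    (hD : HasDerivAt D D' x) (hDpos : 0 < D x) :
    N' * D x + r * N x * D' = 0 := by
  have hzero := hmin.hasDerivAt_eq_zero (hN.mul (hD.rpow_const (Or.inl hDpos.ne')))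
  rw [Real.rpow_sub_one hDpos.ne'] at hzero
  have hDr : 0 < D x ^ r := Real.rpow_pos_of_pos hDpos r
  field_simp at hzero
  simp only [mul_zero, mul_eq_zero, hDr.ne', false_or] at hzero
  linear_combination hzero

theorem minimizer_satisfies_yamabe_equation_general
    {V : Type*} [Fintype V]
    (μ : V → ℝ) (hμ : ∀ i, 0 < μ i)
    (ω : V → V → ℝ) (hωsym : ∀ i j, ω i j = ω j i)
    (h f : V → ℝ) (hf : ∀ i, 0 < f i)
    (p α : ℝ) (hp : 1 < p) (hpα : p ≤ α)
    (φhat : V → ℝ) (hpos : ∀ i, 0 < φhat i)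
    (hmin : ∀ φ : V → ℝ, (∀ i, 0 ≤ φ i) → φ ≠ 0 →
      energy μ ω h f p α φhat ≤ energy μ ω h f p α φ)
    (lamφ : ℝ)
    (hlam : lamφ = -(gradEnergy ω p φhat - ∑ i, μ i * (h i * φhat i ^ p)) /
      (∑ i, μ i * (f i * φhat i ^ α))) :
    ∀ i, pLaplacian μ ω p φhat i + h i * φhat i ^ (p - 1) =
      lamφ * f i * φhat i ^ (α - 1) := by
  classical
  intro i
  have : Nonempty V := ⟨i⟩
  have hφ : ∀ j, φhat j ≠ 0 := fun j => (hpos j).ne'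
  have hB : 0 < ∑ j, μ j * (f j * φhat j ^ α) :=
    Finset.sum_pos (fun j _ => mul_pos (hμ j) (mul_pos (hf j) (Real.rpow_pos_of_pos (hpos j) α)))
      Finset.univ_nonempty
  have hEL := (isLocalMin_comp_add_smul (energy μ ω h f p α) hpos hmin (Pi.single i 1)
    ).hasDerivAt_mul_rpow
    ((hasDerivAt_gradEnergy_add_smul ω hωsym hp φhat _).sub
      (hasDerivAt_sum_mul_rpow_add_smul μ h p hφ _))
    (hasDerivAt_sum_mul_rpow_add_smul μ f α hφ _) (by simpa using hB)
  simp only [Pi.single_apply, mul_ite, mul_one, mul_zero, ite_mul, zero_mul, Finset.sum_ite_eq',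
    Finset.mem_univ, if_true, zero_smul, add_zero] at hEL
  rw [pLaplacian, hlam]
  set S := ∑ j, ω i j * |φhat j - φhat i| ^ (p - 2) * (φhat j - φhat i)
  set A := gradEnergy ω p φhat - ∑ j, μ j * (h j * φhat j ^ p)
  set B := ∑ j, μ j * (f j * φhat j ^ α)
  have hstat : (S + μ i * h i * φhat i ^ (p - 1)) * B + μ i * A * f i * φhat i ^ (α - 1) = 0 := by
    have hα : α ≠ 0 := by linarith
    field_simp at hEL
    linear_combination -(mul_eq_zero.1 hEL).resolve_left (by linarith)
  have hμi : μ i ≠ 0 := (hμ i).ne'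
  field_simp
  linear_combination hstat

/-- A strictly positive minimizer `φ̂` of the energy functional satisfies the
`p`-th Yamabe equation `Δ_p φ̂ + h φ̂^{p−1} = λ_{φ̂} f φ̂^{α−1}` with
`λ_{φ̂} = −(∫_E |∇φ̂|^p dω − ∫_V h φ̂^p dμ) / ∫_V f φ̂^α dμ`. -/
theorem minimizer_satisfies_yamabe_equation
    {V : Type*} [Fintype V] [Nonempty V]
    (μ : V → ℝ) (hμ : ∀ i, 0 < μ i)
    (ω : V → V → ℝ) (hωsym : ∀ i j, ω i j = ω j i)
    (hωnonneg : ∀ i j, 0 ≤ ω i j) (hωloop : ∀ i, ω i i = 0)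
    (h f : V → ℝ) (hf : ∀ i, 0 < f i)
    (p α : ℝ) (hp : 1 < p) (hpα : p ≤ α)
    (φhat : V → ℝ) (hpos : ∀ i, 0 < φhat i)
    (hmin : ∀ φ : V → ℝ, (∀ i, 0 ≤ φ i) → φ ≠ 0 →
      energy μ ω h f p α φhat ≤ energy μ ω h f p α φ)
    (lamφ : ℝ)
    (hlam : lamφ = -(gradEnergy ω p φhat - ∑ i, μ i * (h i * φhat i ^ p)) /
      (∑ i, μ i * (f i * φhat i ^ α))) :
    ∀ i, pLaplacian μ ω p φhat i + h i * φhat i ^ (p - 1) =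
      lamφ * f i * φhat i ^ (α - 1) :=
  minimizer_satisfies_yamabe_equation_general μ hμ ω hωsym h f hf p α hp hpα φhat hpos hmin lamφ
    hlam
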